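/- arXiv:2403.05644 — 2 statements merged into one kernel-verified Lean document; each statement's English description precedes it below -/
import Mathlib

section
/- In the setting of penalized least squares on a finite-dimensional subspace S of an inner product space H, let s_0 be the (unpenalized) orthogonal projection of y onto S and s_λ the minimizer of ‖y - s‖² + λ E(s) for λ > 0. Then ‖s_0 - s_λ‖² = λ ⟨s_λ, s_0 - s_λ⟩_E, and consequently ‖s_λ‖_E ≤ ‖s_0‖_E, where ‖s‖_E = ⟨s,s⟩_E^{1/2}. -/
/-!
Perturbing a minimizer `x` along `t • u` changes the objective by a quadratic in `t` that is
nonnegative for all `t`, so its linear coefficient vanishes: this gives the orthogonality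
relations `⟪y - s₀, u⟫ = 0` and `⟪y - s_λ, u⟫ = λ B s_λ u`. Subtracting them at `u = s₀ - s_λ`
gives the identity `‖s₀ - s_λ‖² = λ B s_λ (s₀ - s_λ)`. Its left side is nonnegative, so
`B s_λ s_λ ≤ B s_λ s₀`, and Cauchy–Schwarz for the semidefinite form `B` bounds the right side by
`‖s_λ‖_E ‖s₀‖_E`.
-/

open scoped RealInnerProductSpace

lemma eq_zero_of_forall_nonneg_quadratic {K : Type*} [Field K] [LinearOrder K]
    [IsStrictOrderedRing K] {a b : K} (h : ∀ t : K, 0 ≤ a * (t * t) + b * t) : b = 0 := by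
  have hd : discrim a b 0 ≤ 0 := discrim_le_zero fun t ↦ by simpa using h t
  rw [discrim, mul_zero, sub_zero] at hd
  exact pow_eq_zero_iff two_ne_zero |>.mp (le_antisymm hd (sq_nonneg b))

lemma LinearMap.BilinForm.apply_add_smul_self {R M : Type*} [CommRing R] [AddCommGroup M]
    [Module R M] (B : LinearMap.BilinForm R M) (hB : LinearMap.IsSymm B) (x u : M) (t : R) :
    B (x + t • u) (x + t • u) = B x x + 2 * t * B x u + t ^ 2 * B u u := by
  have hux : B u x = B x u := (hB.eq x u).symm
  simp only [map_add, map_smul, LinearMap.add_apply, LinearMap.smul_apply, smul_eq_mul, hux]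
  ring

lemma LinearMap.BilinForm.apply_self_le_of_apply_self_le_apply {R M : Type*} [CommRing R]
    [LinearOrder R] [IsStrictOrderedRing R] [AddCommGroup M] [Module R M]
    (B : LinearMap.BilinForm R M) (hs : ∀ x, 0 ≤ B x x) (hB : LinearMap.IsSymm B) {a b : M}
    (h : B a a ≤ B a b) : B a a ≤ B b b := by
  have hcs := B.apply_sq_le_of_symm hs hB a b
  rcases (hs a).eq_or_lt with ha | ha
  · exact ha ▸ hs b
  · have hsq : B a a * B a a ≤ B a a * B b b := by nlinarith
    exact le_of_mul_le_mul_left hsq ha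

lemma norm_sub_add_smul_sq_real {E : Type*} [NormedAddCommGroup E] [InnerProductSpace ℝ E]
    (y x u : E) (t : ℝ) :
    ‖y - (x + t • u)‖ ^ 2 = ‖y - x‖ ^ 2 - 2 * t * ⟪y - x, u⟫ + t ^ 2 * ‖u‖ ^ 2 := by
  rw [← sub_sub, norm_sub_sq_real, real_inner_smul_right, norm_smul, mul_pow,
    Real.norm_eq_abs, sq_abs]
  ring

theorem inner_sub_eq_of_forall_le_penalized {E : Type*} [NormedAddCommGroup E]
    [InnerProductSpace ℝ E] {K : Submodule ℝ E} (B : LinearMap.BilinForm ℝ K)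
    (hB : LinearMap.IsSymm B) (lam : ℝ) {y : E} {x : K}
    (hx : ∀ s : K, ‖y - (x : E)‖ ^ 2 + lam * B x x ≤ ‖y - (s : E)‖ ^ 2 + lam * B s s)
    (u : K) : ⟪y - x, u⟫ = lam * B x u := by
  have hquad : ∀ t : ℝ, 0 ≤ (‖(u : E)‖ ^ 2 + lam * B u u) * (t * t)
      + (-2 * (⟪y - x, u⟫ - lam * B x u)) * t := by
    intro t
    have hxt := hx (x + t • u)
    rw [Submodule.coe_add, Submodule.coe_smul, norm_sub_add_smul_sq_real,
      B.apply_add_smul_self hB] at hxt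
    linarith
  linarith [eq_zero_of_forall_nonneg_quadratic hquad]

theorem penalized_ls_energy_decrease_general {H : Type*} [NormedAddCommGroup H]
    [InnerProductSpace ℝ H] (S : Submodule ℝ H)
    (B : S →ₗ[ℝ] S →ₗ[ℝ] ℝ) (hsymm : ∀ a b : S, B a b = B b a)
    (hpos : ∀ a : S, 0 ≤ B a a) (y : H) (lam : ℝ) (hlam : 0 < lam)
    (s0 slam : S)
    (hmin0 : ∀ s : S, ‖y - (s0 : H)‖ ^ 2 ≤ ‖y - (s : H)‖ ^ 2)
    (hminlam : ∀ s : S, ‖y - (slam : H)‖ ^ 2 + lam * B slam slam ≤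
      ‖y - (s : H)‖ ^ 2 + lam * B s s) :
    ‖(s0 : H) - (slam : H)‖ ^ 2 = lam * B slam (s0 - slam) ∧
      Real.sqrt (B slam slam) ≤ Real.sqrt (B s0 s0) := by
  have hB : LinearMap.IsSymm B := ⟨hsymm⟩
  have horth0 : ⟪y - s0, ((s0 - slam : S) : H)⟫ = 0 := by
    simpa using inner_sub_eq_of_forall_le_penalized B hB 0 (by simpa using hmin0) (s0 - slam)
  have horthlam := inner_sub_eq_of_forall_le_penalized B hB lam hminlam (s0 - slam)
  have hdist : ‖(s0 : H) - (slam : H)‖ ^ 2 = lam * B slam (s0 - slam) := by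
    rw [← horthlam, ← sub_zero ⟪y - slam, _⟫, ← horth0, ← inner_sub_left,
      Submodule.coe_sub, sub_sub_sub_cancel_left, real_inner_self_eq_norm_sq]
  refine ⟨hdist, Real.sqrt_le_sqrt
    (LinearMap.BilinForm.apply_self_le_of_apply_self_le_apply B hpos hB ?_)⟩
  have hnonneg : 0 ≤ B slam (s0 - slam) :=
    nonneg_of_mul_nonneg_right (hdist ▸ sq_nonneg _) hlam
  rwa [map_sub, sub_nonneg] at hnonneg

/-- With s₀ the unpenalized least-squares solution (orthogonal projection of y
onto S) and s_λ the λ-penalized minimizer (λ > 0), we have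
‖s₀ - s_λ‖² = λ ⟨s_λ, s₀ - s_λ⟩_E and consequently ‖s_λ‖_E ≤ ‖s₀‖_E. -/
theorem penalized_ls_energy_decrease {H : Type*} [NormedAddCommGroup H]
    [InnerProductSpace ℝ H] (S : Submodule ℝ H) [FiniteDimensional ℝ S]
    (B : S →ₗ[ℝ] S →ₗ[ℝ] ℝ) (hsymm : ∀ a b : S, B a b = B b a)
    (hpos : ∀ a : S, 0 ≤ B a a) (y : H) (lam : ℝ) (hlam : 0 < lam)
    (s0 slam : S)
    (hmin0 : ∀ s : S, ‖y - (s0 : H)‖ ^ 2 ≤ ‖y - (s : H)‖ ^ 2)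
    (hminlam : ∀ s : S, ‖y - (slam : H)‖ ^ 2 + lam * B slam slam ≤
      ‖y - (s : H)‖ ^ 2 + lam * B s s) :
    ‖(s0 : H) - (slam : H)‖ ^ 2 = lam * B slam (s0 - slam) ∧
      Real.sqrt (B slam slam) ≤ Real.sqrt (B s0 s0) :=
  penalized_ls_energy_decrease_general S B hsymm hpos y lam hlam s0 slam hmin0 hminlam
end

section
/- With s_0 the orthogonal projection of y onto S and s_λ the λ-penalized minimizer, suppose there exists a constant V̄ > 0 such that ‖p‖_E ≤ V̄ ‖p‖ for all p ∈ S. Then ‖s_0 - s_λ‖ ≤ λ V̄ ‖s_λ‖_E ≤ λ V̄ ‖s_0‖_E. -/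
/-!
Put `d = s₀ - s_λ ∈ S`. Subtracting the two normal equations gives `⟪d, u⟫ = λ ⟪s_λ, u⟫_E` for
`u ∈ S`, so `‖d‖² = λ ⟪s_λ, d⟫_E ≤ λ ‖s_λ‖_E ‖d‖_E ≤ λ V̄ ‖s_λ‖_E ‖d‖` by Cauchy–Schwarz for the
seminorm. The same identity shows `⟪s_λ, s₀ - s_λ⟫_E ≥ 0`, i.e. `‖s_λ‖_E² ≤ ⟪s_λ, s₀⟫_E`, and
Cauchy–Schwarz once more gives `‖s_λ‖_E ≤ ‖s₀‖_E`.
-/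

open RealInnerProductSpace

lemma le_of_sq_le_mul {a c : ℝ} (hc : 0 ≤ c) (h : a ^ 2 ≤ c * a) : a ≤ c := by
  nlinarith

namespace LinearMap.BilinForm

variable {M : Type*} [AddCommGroup M] [Module ℝ M] {B : LinearMap.BilinForm ℝ M}

lemma apply_le_sqrt_mul_sqrt (hs : ∀ x, 0 ≤ B x x) (hB : LinearMap.IsSymm B) (x y : M) :
    B x y ≤ √(B x x) * √(B y y) := by
  rw [← Real.sqrt_mul (hs x)]
  exact Real.le_sqrt_of_sq_le (B.apply_sq_le_of_symm hs hB x y)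

lemma sqrt_apply_self_le_of_apply_self_le (hs : ∀ x, 0 ≤ B x x) (hB : LinearMap.IsSymm B)
    {x y : M} (h : B x x ≤ B x y) : √(B x x) ≤ √(B y y) := by
  refine le_of_sq_le_mul (Real.sqrt_nonneg _) ?_
  rw [Real.sq_sqrt (hs x), mul_comm]
  exact h.trans (apply_le_sqrt_mul_sqrt hs hB x y)

end LinearMap.BilinForm

section PenalizedLeastSquares

variable {H : Type*} [NormedAddCommGroup H] [InnerProductSpace ℝ H] {S : Submodule ℝ H}
  {B : LinearMap.BilinForm ℝ S} {lam V : ℝ} {s d : S}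

lemma norm_sq_eq_of_inner_eq (hd : ∀ u : S, ⟪(d : H), u⟫ = lam * B s u) :
    ‖(d : H)‖ ^ 2 = lam * B s d := by
  rw [← hd, real_inner_self_eq_norm_sq]

lemma norm_le_of_inner_eq (hs : ∀ x, 0 ≤ B x x) (hB : LinearMap.IsSymm B) (hlam : 0 ≤ lam)
    (hV0 : 0 ≤ V) (hV : ∀ p : S, √(B p p) ≤ V * ‖(p : H)‖)
    (hd : ∀ u : S, ⟪(d : H), u⟫ = lam * B s u) :
    ‖(d : H)‖ ≤ lam * V * √(B s s) := by
  refine le_of_sq_le_mul (by positivity) ?_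
  calc ‖(d : H)‖ ^ 2 = lam * B s d := norm_sq_eq_of_inner_eq hd
    _ ≤ lam * (√(B s s) * √(B d d)) := by
      gcongr; exact LinearMap.BilinForm.apply_le_sqrt_mul_sqrt hs hB s d
    _ ≤ lam * (√(B s s) * (V * ‖(d : H)‖)) := by gcongr; exact hV d
    _ = lam * V * √(B s s) * ‖(d : H)‖ := by ring

end PenalizedLeastSquares

theorem penalized_ls_distance_bound_general {H : Type*} [NormedAddCommGroup H]
    [InnerProductSpace ℝ H] (S : Submodule ℝ H)
    (B : S →ₗ[ℝ] S →ₗ[ℝ] ℝ) (hsymm : ∀ a b : S, B a b = B b a)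
    (hpos : ∀ a : S, 0 ≤ B a a) (y : H) (lam : ℝ) (hlam : 0 < lam)
    (Vbar : ℝ) (hVbar : 0 < Vbar)
    (hV : ∀ p : S, Real.sqrt (B p p) ≤ Vbar * ‖(p : H)‖)
    (s0 slam : S)
    (h0 : ∀ u : S, (inner ℝ (y - (s0 : H)) (u : H) : ℝ) = 0)
    (hlamchar : ∀ u : S,
      (inner ℝ (y - (slam : H)) (u : H) : ℝ) = lam * B slam u) :
    ‖(s0 : H) - (slam : H)‖ ≤ lam * Vbar * Real.sqrt (B slam slam) ∧
      lam * Vbar * Real.sqrt (B slam slam) ≤ lam * Vbar * Real.sqrt (B s0 s0) := by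
  have hB : LinearMap.IsSymm B := ⟨hsymm⟩
  have hd : ∀ u : S, ⟪((s0 - slam : S) : H), u⟫ = lam * B slam u := fun u => by
    rw [Submodule.coe_sub, ← sub_sub_sub_cancel_left _ _ y, inner_sub_left, h0, hlamchar,
      sub_zero]
  refine ⟨norm_le_of_inner_eq hpos hB hlam.le hVbar.le hV hd, ?_⟩
  have hslam : B slam slam ≤ B slam s0 := by
    have hnonneg : 0 ≤ lam * B slam (s0 - slam) := by
      rw [← norm_sq_eq_of_inner_eq hd]; positivity
    rw [map_sub] at hnonneg
    exact sub_nonneg.mp (nonneg_of_mul_nonneg_right hnonneg hlam)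
  exact mul_le_mul_of_nonneg_left
    (LinearMap.BilinForm.sqrt_apply_self_le_of_apply_self_le hpos hB hslam) (by positivity)

/-- If ‖p‖_E ≤ V̄ ‖p‖ for all p ∈ S, then the unpenalized and penalized
least-squares solutions satisfy ‖s₀ - s_λ‖ ≤ λ V̄ ‖s_λ‖_E ≤ λ V̄ ‖s₀‖_E. -/
theorem penalized_ls_distance_bound {H : Type*} [NormedAddCommGroup H]
    [InnerProductSpace ℝ H] (S : Submodule ℝ H) [FiniteDimensional ℝ S]
    (B : S →ₗ[ℝ] S →ₗ[ℝ] ℝ) (hsymm : ∀ a b : S, B a b = B b a)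
    (hpos : ∀ a : S, 0 ≤ B a a) (y : H) (lam : ℝ) (hlam : 0 < lam)
    (Vbar : ℝ) (hVbar : 0 < Vbar)
    (hV : ∀ p : S, Real.sqrt (B p p) ≤ Vbar * ‖(p : H)‖)
    (s0 slam : S)
    (h0 : ∀ u : S, (inner ℝ (y - (s0 : H)) (u : H) : ℝ) = 0)
    (hlamchar : ∀ u : S,
      (inner ℝ (y - (slam : H)) (u : H) : ℝ) = lam * B slam u) :
    ‖(s0 : H) - (slam : H)‖ ≤ lam * Vbar * Real.sqrt (B slam slam) ∧
      lam * Vbar * Real.sqrt (B slam slam) ≤ lam * Vbar * Real.sqrt (B s0 s0) :=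
  penalized_ls_distance_bound_general S B hsymm hpos y lam hlam Vbar hVbar hV s0 slam h0 hlamchar
end
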